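/- arXiv:1309.1558 — 4 statements merged into one kernel-verified Lean document; each statement's English description precedes it below -/
import Mathlib

section
/- For an increasing bijection λ: [0,1] → [0,1] and r ∈ [0,1), define θ_r λ(s) = λ(r+s) - λ(r) for s ∈ [0, 1-r] and θ_r λ(s) = 1 - λ(r) + λ(r+s-1) for s ∈ [1-r, 1]. Then sup_{s<t} |log((θ_r λ(t) - θ_r λ(s))/(t-s))| = sup_{s<t} |log((λ(t)-λ(s))/(t-s))|. -/
open Set

/-- `lam` is an increasing bijection of `[0,1]` onto itself with `lam 0 = 0, lam 1 = 1`. -/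
def IncBij (lam : ℝ → ℝ) : Prop :=
  StrictMonoOn lam (Icc 0 1) ∧ BijOn lam (Icc 0 1) (Icc 0 1) ∧ lam 0 = 0 ∧ lam 1 = 1

/-- `sup_{s<t} |log ((lam t - lam s)/(t-s))|` over `0 ≤ s < t ≤ 1`. -/
noncomputable def supLog (lam : ℝ → ℝ) : ℝ :=
  sSup {x | ∃ s t : ℝ, 0 ≤ s ∧ s < t ∧ t ≤ 1 ∧ x = |Real.log ((lam t - lam s) / (t - s))|}

/-- The regathering operator `θ_r`: cut the graph of `lam` at time `r` and swap the pieces. -/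
noncomputable def theta (r : ℝ) (lam : ℝ → ℝ) : ℝ → ℝ := fun s =>
  if s ≤ 1 - r then lam (r + s) - lam r else 1 - lam r + lam (r + s - 1)

/-- weaker hypothesis package -/
def IncLike (lam : ℝ → ℝ) : Prop :=
  StrictMonoOn lam (Icc 0 1) ∧ lam 0 = 0 ∧ lam 1 = 1

def slopeSet (lam : ℝ → ℝ) : Set ℝ :=
  {x | ∃ s t : ℝ, 0 ≤ s ∧ s < t ∧ t ≤ 1 ∧ x = |Real.log ((lam t - lam s) / (t - s))|}

lemma supLog_eq (lam : ℝ → ℝ) : supLog lam = sSup (slopeSet lam) := rfl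

lemma slopeSet_congr {f g : ℝ → ℝ} (h : ∀ x ∈ Icc (0:ℝ) 1, f x = g x) :
    slopeSet f = slopeSet g := by
  ext x
  constructor <;> rintro ⟨s, t, h0, hst, h1, rfl⟩ <;>
    exact ⟨s, t, h0, hst, h1, by
      rw [h s ⟨h0, le_of_lt (lt_of_lt_of_le hst h1)⟩, h t ⟨le_trans h0 hst.le, h1⟩]⟩ 

lemma slopeSet_nonempty {f : ℝ → ℝ} (h0 : f 0 = 0) (h1 : f 1 = 1) :
    (slopeSet f).Nonempty := by
  refine ⟨0, 0, 1, le_refl _, zero_lt_one, le_refl _, ?_⟩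
  simp [h0, h1]

lemma mediant_le {A B p q : ℝ} (hp : 0 < p) (hq : 0 < q) (h : A / p ≤ B / q) :
    A / p ≤ (A + B) / (p + q) ∧ (A + B) / (p + q) ≤ B / q := by
  have h' : A * q ≤ B * p := (div_le_div_iff₀ hp hq).1 h
  constructor
  · rw [div_le_div_iff₀ hp (by linarith)]; nlinarith
  · rw [div_le_div_iff₀ (by linarith) hq]; nlinarith

lemma abs_log_mediant {A B p q : ℝ} (hA : 0 < A) (hB : 0 < B) (hp : 0 < p) (hq : 0 < q) :
    |Real.log ((A + B) / (p + q))| ≤ max |Real.log (A / p)| |Real.log (B / q)| := by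
  rcases le_total (A / p) (B / q) with h | h
  · obtain ⟨h1, h2⟩ := mediant_le hp hq h
    have ha : 0 < A / p := div_pos hA hp
    rw [abs_le]
    constructor
    · have := Real.log_le_log ha h1
      have := neg_abs_le (Real.log (A / p))
      have := le_max_left |Real.log (A / p)| |Real.log (B / q)|
      linarith
    · have := Real.log_le_log (lt_of_lt_of_le ha h1) h2
      have := le_abs_self (Real.log (B / q))
      have := le_max_right |Real.log (A / p)| |Real.log (B / q)|
      linarith
  · obtain ⟨h1, h2⟩ := mediant_le hq hp h
    have hb : 0 < B / q := div_pos hB hq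
    have e : (B + A) / (q + p) = (A + B) / (p + q) := by rw [add_comm B A, add_comm q p]
    rw [e] at h1 h2
    rw [abs_le]
    constructor
    · have := Real.log_le_log hb h1
      have := neg_abs_le (Real.log (B / q))
      have := le_max_right |Real.log (A / p)| |Real.log (B / q)|
      linarith
    · have := Real.log_le_log (lt_of_lt_of_le hb h1) h2
      have := le_abs_self (Real.log (A / p))
      have := le_max_left |Real.log (A / p)| |Real.log (B / q)|
      linarith

lemma theta_incLike {lam : ℝ → ℝ} (hl : IncLike lam) {r : ℝ} (hr : r ∈ Icc (0:ℝ) 1) :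
    IncLike (theta r lam) := by
  obtain ⟨hm, h0, h1⟩ := hl
  obtain ⟨hr0, hr1⟩ := hr
  have hmon := hm.monotoneOn
  refine ⟨?_, ?_, ?_⟩
  · intro x hx y hy hxy
    simp only [theta]
    split_ifs with hx1 hy1 hy1
    · have : lam (r + x) < lam (r + y) := hm ⟨by linarith [hx.1], by linarith⟩
        ⟨by linarith [hy.1], by linarith⟩ (by linarith)
      linarith
    · push_neg at hy1
      have e1 : lam (r + x) ≤ lam 1 := hmon ⟨by linarith [hx.1], by linarith⟩
        (by constructor <;> norm_num) (by linarith)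
      have e2 : lam 0 < lam (r + y - 1) := hm (by constructor <;> norm_num)
        ⟨by linarith, by linarith [hy.2]⟩ (by linarith)
      rw [h0] at e2; rw [h1] at e1
      linarith
    · push_neg at hx1; linarith
    · push_neg at hx1
      have : lam (r + x - 1) < lam (r + y - 1) := hm ⟨by linarith, by linarith [hx.2]⟩
        ⟨by linarith, by linarith [hy.2]⟩ (by linarith)
      linarith
  · simp only [theta, add_zero, if_pos (by linarith : (0:ℝ) ≤ 1 - r)]; ring
  · simp only [theta]
    split_ifs with h
    · have : r = 0 := le_antisymm (by linarith) hr0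
      subst this
      norm_num [h1, h0]
    · have e : r + 1 - 1 = r := by ring
      rw [e]; ring

lemma theta_theta {lam : ℝ → ℝ} (hl : IncLike lam) {r : ℝ} (hr : r ∈ Icc (0:ℝ) 1)
    {x : ℝ} (hx : x ∈ Icc (0:ℝ) 1) :
    theta (1 - r) (theta r lam) x = lam x := by
  obtain ⟨hm, h0, h1⟩ := hl
  obtain ⟨hr0, hr1⟩ := hr
  obtain ⟨hx0, hx1⟩ := hx
  have hmu1r : theta r lam (1 - r) = 1 - lam r := by
    simp only [theta, if_pos (le_refl (1 - r))]
    have e : r + (1 - r) = 1 := by ring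
    rw [e, h1]
  rcases le_or_gt x r with hxr | hxr
  · rcases eq_or_lt_of_le hx0 with h00 | h00
    · simp only [theta, ← h00]
      rw [if_pos (by linarith : (0:ℝ) ≤ 1 - (1 - r)), add_zero, if_pos (le_refl (1 - r))]
      rw [h0]; ring
    · simp only [theta]
      rw [if_pos (by linarith : x ≤ 1 - (1 - r))]
      rw [if_neg (by linarith : ¬ (1 - r + x ≤ 1 - r)), if_pos (le_refl (1 - r))]
      have e1 : r + (1 - r + x) - 1 = x := by ring
      have e2 : r + (1 - r) = 1 := by ring
      rw [e1, e2, h1]; ring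
  · simp only [theta]
    rw [if_neg (by linarith : ¬ x ≤ 1 - (1 - r))]
    rw [if_pos (le_refl (1 - r)), if_pos (by linarith : 1 - r + x - 1 ≤ 1 - r)]
    have e1 : r + (1 - r + x - 1) = x := by ring
    have e2 : r + (1 - r) = 1 := by ring
    rw [e1, e2, h1]; ring

lemma dominance {lam : ℝ → ℝ} (hl : IncLike lam) {r : ℝ} (hr : r ∈ Icc (0:ℝ) 1) :
    ∀ x ∈ slopeSet (theta r lam), ∃ y ∈ slopeSet lam, x ≤ y := by
  obtain ⟨hm, h0, h1⟩ := hl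
  obtain ⟨hr0, hr1⟩ := hr
  rintro x ⟨s, t, hs0, hst, ht1, rfl⟩
  by_cases ht : t ≤ 1 - r
  · -- both in first branch
    have hs : s ≤ 1 - r := by linarith
    have e : theta r lam t - theta r lam s = lam (r + t) - lam (r + s) := by
      simp only [theta, if_pos ht, if_pos hs]; ring
    refine ⟨|Real.log ((lam (r + t) - lam (r + s)) / (r + t - (r + s)))|,
      ⟨r + s, r + t, by linarith, by linarith, by linarith, rfl⟩, le_of_eq ?_⟩
    rw [e, show r + t - (r + s) = t - s by ring]
  · by_cases hs : s ≤ 1 - r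
    · push_neg at ht
      rcases eq_or_lt_of_le hs with hs' | hs'
      · -- s = 1 - r exactly
        have e : theta r lam t - theta r lam s = lam (r + t - 1) - lam 0 := by
          simp only [theta, if_neg (not_le.2 ht), if_pos hs]
          rw [h0, hs', show r + (1 - r) = 1 by ring, h1]; ring
        refine ⟨|Real.log ((lam (r + t - 1) - lam 0) / (r + t - 1 - 0))|,
          ⟨0, r + t - 1, le_refl _, by linarith, by linarith, rfl⟩, le_of_eq ?_⟩
        rw [e, show r + t - 1 - 0 = t - s by rw [hs']; ring]
      · -- genuinely crossing: mediant
        have hA : 0 < lam 1 - lam (r + s) := by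
          have := hm (a := r + s) (b := 1) ⟨by linarith, by linarith⟩
            (by constructor <;> norm_num) (by linarith)
          linarith
        have hB : 0 < lam (r + t - 1) - lam 0 := by
          have := hm (a := 0) (b := r + t - 1) (by constructor <;> norm_num)
            ⟨by linarith, by linarith⟩ (by linarith)
          linarith
        have hp : (0:ℝ) < 1 - (r + s) := by linarith
        have hq : (0:ℝ) < r + t - 1 - 0 := by linarith
        have e : theta r lam t - theta r lam s
            = (lam 1 - lam (r + s)) + (lam (r + t - 1) - lam 0) := by
          simp only [theta, if_neg (not_le.2 ht), if_pos hs]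
          rw [h0, h1]; ring
        have e2 : t - s = (1 - (r + s)) + (r + t - 1 - 0) := by ring
        have key := abs_log_mediant hA hB hp hq
        rw [← e, ← e2] at key
        rcases le_total |Real.log ((lam 1 - lam (r + s)) / (1 - (r + s)))|
            |Real.log ((lam (r + t - 1) - lam 0) / (r + t - 1 - 0))| with hab | hab
        · refine ⟨|Real.log ((lam (r + t - 1) - lam 0) / (r + t - 1 - 0))|,
            ⟨0, r + t - 1, le_refl _, by linarith, by linarith, rfl⟩, ?_⟩
          calc _ ≤ _ := key
            _ = _ := max_eq_right hab
        · refine ⟨|Real.log ((lam 1 - lam (r + s)) / (1 - (r + s)))|,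
            ⟨r + s, 1, by linarith, by linarith, le_refl _, rfl⟩, ?_⟩
          calc _ ≤ _ := key
            _ = _ := max_eq_left hab
    · -- both in second branch
      push_neg at hs
      have e : theta r lam t - theta r lam s = lam (r + t - 1) - lam (r + s - 1) := by
        simp only [theta, if_neg (not_le.2 (by linarith : 1 - r < t)), if_neg (not_le.2 hs)]
        ring
      refine ⟨|Real.log ((lam (r + t - 1) - lam (r + s - 1)) / (r + t - 1 - (r + s - 1)))|,
        ⟨r + s - 1, r + t - 1, by linarith, by linarith, by linarith, rfl⟩, le_of_eq ?_⟩
      rw [e, show r + t - 1 - (r + s - 1) = t - s by ring]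

lemma sSup_eq_of_dominance {A B : Set ℝ} (hA : A.Nonempty) (hB : B.Nonempty)
    (h1 : ∀ x ∈ A, ∃ y ∈ B, x ≤ y) (h2 : ∀ y ∈ B, ∃ x ∈ A, y ≤ x) :
    sSup A = sSup B := by
  by_cases hbB : BddAbove B
  · have hbA : BddAbove A := by
      obtain ⟨M, hM⟩ := hbB
      refine ⟨M, fun x hx => ?_⟩
      obtain ⟨y, hy, hxy⟩ := h1 x hx
      exact hxy.trans (hM hy)
    apply le_antisymm
    · refine csSup_le hA fun x hx => ?_
      obtain ⟨y, hy, hxy⟩ := h1 x hx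
      exact hxy.trans (le_csSup hbB hy)
    · refine csSup_le hB fun y hy => ?_
      obtain ⟨x, hx, hyx⟩ := h2 y hy
      exact hyx.trans (le_csSup hbA hx)
  · have hbA : ¬ BddAbove A := by
      intro ⟨M, hM⟩
      exact hbB ⟨M, fun y hy => by
        obtain ⟨x, hx, hyx⟩ := h2 y hy
        exact hyx.trans (hM hx)⟩
    rw [Real.sSup_of_not_bddAbove hbA, Real.sSup_of_not_bddAbove hbB]

/-- `sup_{s<t} |log((θ_r lam t - θ_r lam s)/(t-s))| = sup_{s<t} |log((lam t - lam s)/(t-s))|`. -/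
theorem supLog_theta (lam : ℝ → ℝ) (hlam : IncBij lam) (r : ℝ) (hr : r ∈ Ico (0:ℝ) 1) :
    supLog (theta r lam) = supLog lam := by
  obtain ⟨hm, _, h0, h1⟩ := hlam
  have hl : IncLike lam := ⟨hm, h0, h1⟩
  have hrI : r ∈ Icc (0:ℝ) 1 := ⟨hr.1, hr.2.le⟩
  have h1rI : 1 - r ∈ Icc (0:ℝ) 1 := ⟨by linarith [hr.2], by linarith [hr.1]⟩
  have hmu : IncLike (theta r lam) := theta_incLike hl hrI
  have hsetEq : slopeSet lam = slopeSet (theta (1 - r) (theta r lam)) :=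
    slopeSet_congr fun x hx => (theta_theta hl hrI hx).symm
  have dom1 : ∀ x ∈ slopeSet (theta r lam), ∃ y ∈ slopeSet lam, x ≤ y := dominance hl hrI
  have dom2 : ∀ y ∈ slopeSet lam, ∃ x ∈ slopeSet (theta r lam), y ≤ x := by
    rw [hsetEq]
    exact dominance hmu h1rI
  rw [supLog_eq, supLog_eq]
  exact sSup_eq_of_dominance (slopeSet_nonempty hmu.2.1 hmu.2.2)
    (slopeSet_nonempty h0 h1) dom1 dom2
end

section
/- The multi-occupation field is invariant under circular translation of based loops: if l is a based loop of duration t (a càdlàg function l: [0,t] → S with l(0) = l(t)) and Θ_r l is its circular translation by r ∈ [0,t), then for every bounded measurable f: S^n → ℝ, ⟨Θ_r l, f⟩ = ⟨l, f⟩, where ⟨l,f⟩ = Σ_{j=0}^{n-1} ∫_{0<s^1<⋯<s^n<t} f(r_j(l(s^1),…,l(s^n))) ds^1⋯ds^n. -/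
open Filter Topology MeasureTheory Set

variable {S : Type*} [MetricSpace S]

/-- A based loop, represented by its periodic extension to all of `ℝ`:
a càdlàg function `f : ℝ → S` of period `len > 0`. -/
structure BasedLoop (S : Type*) [MetricSpace S] where
  f : ℝ → S
  len : ℝ
  len_pos : 0 < len
  periodic : ∀ u, f (u + len) = f u
  rightCont : ∀ u, Tendsto f (𝓝[>] u) (𝓝 (f u))
  leftLim : ∀ u, ∃ y, Tendsto f (𝓝[<] u) (𝓝 y)

/-- The Skorokhod-type distance on (normalized) paths over `[0,1]`. -/
noncomputable def skorDist (f g : ℝ → S) : ℝ :=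
  sInf {x | ∃ lam, IncBij lam ∧
    x = supLog lam + sSup {y | ∃ u ∈ Icc (0:ℝ) 1, y = dist (f (lam u)) (g u)}}

/-- Normalization of a based loop to duration 1. -/
noncomputable def BasedLoop.normalized (l : BasedLoop S) : ℝ → S := fun u => l.f (l.len * u)

/-- The distance `D` on based loops. -/
noncomputable def loopDist (l1 l2 : BasedLoop S) : ℝ :=
  |l1.len - l2.len| + skorDist l1.normalized l2.normalized

/-- Circular translation `Θ_r` of a based loop. -/
def BasedLoop.shift (l : BasedLoop S) (r : ℝ) : BasedLoop S where
  f := fun u => l.f (u + r)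
  len := l.len
  len_pos := l.len_pos
  periodic := fun u => by simpa [add_right_comm] using l.periodic (u + r)
  rightCont := fun u => by
    have h : Tendsto (fun u' : ℝ => u' + r) (𝓝[>] u) (𝓝[>] (u + r)) := by
      apply tendsto_nhdsWithin_of_tendsto_nhds_of_eventually_within
      · exact ((continuous_id.add continuous_const).tendsto u).mono_left nhdsWithin_le_nhds
      · filter_upwards [self_mem_nhdsWithin] with x hx
        exact mem_Ioi.mpr (by linarith [mem_Ioi.mp hx])
    exact (l.rightCont (u + r)).comp h
  leftLim := fun u => by
    obtain ⟨y, hy⟩ := l.leftLim (u + r)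
    refine ⟨y, hy.comp ?_⟩
    apply tendsto_nhdsWithin_of_tendsto_nhds_of_eventually_within
    · exact ((continuous_id.add continuous_const).tendsto u).mono_left nhdsWithin_le_nhds
    · filter_upwards [self_mem_nhdsWithin] with x hx
      exact mem_Iio.mpr (by linarith [mem_Iio.mp hx])

/-- Equivalence of based loops: identical up to circular translation. -/
def LoopEquiv (l1 l2 : BasedLoop S) : Prop :=
  l1.len = l2.len ∧ ∃ r : ℝ, ∀ u, l1.f (u + r) = l2.f u

instance loopSetoid (S : Type*) [MetricSpace S] : Setoid (BasedLoop S) where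
  r := LoopEquiv
  iseqv := by
    constructor
    · exact fun l => ⟨rfl, 0, fun u => by simp⟩
    · rintro a b ⟨hlen, r, hr⟩
      refine ⟨hlen.symm, -r, fun u => ?_⟩
      have h2 := hr (u - r)
      rw [sub_add_cancel] at h2
      rw [h2]; congr 1
    · rintro a b c ⟨hab, r1, h1⟩ ⟨hbc, r2, h2⟩
      refine ⟨hab.trans hbc, r2 + r1, fun u => ?_⟩
      have := h1 (u + r2)
      rw [show u + (r2 + r1) = u + r2 + r1 by ring, this, h2]

/-- A loop is an equivalence class of based loops modulo circular translation. -/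
def Loop (S : Type*) [MetricSpace S] := Quotient (loopSetoid S)

/-- The distance `Dᵒ` on loops. -/
noncomputable def loopDistO (L1 L2 : Loop S) : ℝ :=
  sInf {x | ∃ l1 l2 : BasedLoop S, ⟦l1⟧ = L1 ∧ ⟦l2⟧ = L2 ∧ x = loopDist l1 l2}

/-- The multi-occupation field `⟨l, f⟩` of a (periodically extended) path `l`
of duration `t`, for `f : Sⁿ → ℝ`. -/
noncomputable def occField (n : ℕ) (l : ℝ → S) (t : ℝ) (f : (Fin n → S) → ℝ) : ℝ :=
  ∑ j : Fin n,
    ∫ s in {s : Fin n → ℝ | (∀ i, s i ∈ Ioo 0 t) ∧ StrictMono s},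
      f (fun i => l (s (i + j)))

/-- The multi-occupation field of a loop, computed from a representative. -/
noncomputable def occFieldLoop (n : ℕ) (L : Loop S) (f : (Fin n → S) → ℝ) : ℝ :=
  occField n (Quotient.out L).f (Quotient.out L).len f

/-- Open sets of the loop space for the metric `Dᵒ`. -/
def IsOpenLoop (A : Set (Loop S)) : Prop :=
  ∀ L ∈ A, ∃ ε > 0, ∀ L', loopDistO L L' < ε → L' ∈ A

/-!
Cut the ordered simplex `0 < s₁ < ⋯ < sₙ < t` at the level `t - r`. On the piece where exactly
`m` coordinates lie below `t - r`, adding `r` and reducing mod `t` moves the last `n - m`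
coordinates to the front: composed with the rotation of indices by `m`, it is a translation
mapping the piece onto the piece of the simplex cut at level `r` with `n - m` coordinates below
the cut. Since the path is `t`-periodic, the integrand of the `j`-th term for `Θ_r l` becomes the
integrand of the `(j - m)`-th term for `l`; summing over `j` and over the pieces gives the claim.
-/

open Function Finset Fin.NatCast

theorem measurable_of_continuousWithinAt_Ioi {X : Type*} [TopologicalSpace X]
    [TopologicalSpace.PseudoMetrizableSpace X] [MeasurableSpace X] [BorelSpace X] {f : ℝ → X}
    (hf : ∀ u, ContinuousWithinAt f (Ioi u) u) : Measurable f := by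
  set grid : ℕ → ℝ → ℝ := fun k u => ⌈u * (k + 1)⌉ / (k + 1)
  have hk : ∀ k : ℕ, (0 : ℝ) < k + 1 := fun k => by positivity
  have grid_ge : ∀ k u, u ≤ grid k u := fun k u => by
    rw [le_div_iff₀ (hk k)]
    exact Int.le_ceil _
  have grid_le : ∀ k u, grid k u ≤ u + 1 / (k + 1) := fun k u => by
    rw [div_le_iff₀ (hk k), add_mul, one_div_mul_cancel (hk k).ne']
    exact (Int.ceil_lt_add_one _).le
  refine measurable_of_tendsto_metrizable (f := fun k u => f (grid k u)) (fun k => ?_) ?_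
  · exact (measurable_of_countable fun z : ℤ => f (z / (k + 1))).comp
      (measurable_id.mul_const _).ceil
  refine tendsto_pi_nhds.2 fun u => (continuousWithinAt_Ioi_iff_Ici.1 (hf u)).tendsto.comp ?_
  refine tendsto_nhdsWithin_of_tendsto_nhds_of_eventually_within _ ?_
    (Eventually.of_forall fun k => grid_ge k u)
  refine tendsto_of_tendsto_of_tendsto_of_le_of_le tendsto_const_nhds ?_ (grid_ge · u) (grid_le · u)
  simpa using tendsto_const_nhds.add (tendsto_one_div_add_atTop_nhds_zero_nat (𝕜 := ℝ))

theorem Fin.lt_card_filter_iff_of_antitone {n : ℕ} {P : Fin n → Prop} [DecidablePred P]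
    (hP : Antitone P) (i : Fin n) : (i : ℕ) < #{j | P j} ↔ P i := by
  constructor
  · intro hi
    by_contra hPi
    have : ({j | P j} : Finset (Fin n)) ⊆ Finset.Iio i := fun j hj =>
      Finset.mem_Iio.2 (lt_of_not_ge fun hij => hPi (hP hij (Finset.mem_filter.1 hj).2))
    have := Finset.card_le_card this
    rw [Fin.card_Iio] at this
    omega
  · intro hPi
    have : Finset.Iic i ⊆ ({j | P j} : Finset (Fin n)) := fun j hj =>
      Finset.mem_filter.2 ⟨Finset.mem_univ j, hP (Finset.mem_Iic.1 hj) hPi⟩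
    have := Finset.card_le_card this
    rw [Fin.card_Iic] at this
    omega

section FinRotation

variable {n : ℕ} [NeZero n]

theorem Fin.val_add_natCast_of_le {k : ℕ} (hk : k ≤ n) (p : Fin n) :
    ((p + (k : Fin n) : Fin n) : ℕ) = if (p : ℕ) < n - k then (p : ℕ) + k else (p : ℕ) + k - n := by
  rw [Fin.val_add, Fin.val_natCast]
  rcases hk.lt_or_eq with hlt | rfl
  · rw [Nat.mod_eq_of_lt hlt]
    split_ifs with h
    · exact Nat.mod_eq_of_lt (by omega)
    · rw [Nat.mod_eq_sub_mod (by omega), Nat.mod_eq_of_lt (by omega)]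
  · rw [Nat.mod_self, add_zero, Nat.mod_eq_of_lt p.isLt, if_neg (by omega), Nat.add_sub_cancel]

theorem Fin.val_add_natCast_lt_iff {k : ℕ} (hk : k ≤ n) (p : Fin n) :
    ((p + (k : Fin n) : Fin n) : ℕ) < k ↔ n - k ≤ p := by
  rw [Fin.val_add_natCast_of_le hk]
  split_ifs <;> omega

theorem Fin.natCast_sub_add_natCast {m : ℕ} (hm : m ≤ n) :
    ((n - m : ℕ) : Fin n) + (m : Fin n) = 0 := by
  rw [← Nat.cast_add, Nat.sub_add_cancel hm, Fin.natCast_self]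

end FinRotation

section Simplex

variable {n : ℕ}

def orderedSimplex (n : ℕ) (t : ℝ) : Set (Fin n → ℝ) :=
  {s | (∀ i, s i ∈ Ioo 0 t) ∧ StrictMono s}

theorem occField_eq_sum_integral_orderedSimplex {X : Type*} (g : ℝ → X) (t : ℝ)
    (F : (Fin n → X) → ℝ) :
    occField n g t F = ∑ j : Fin n, ∫ s in orderedSimplex n t, F (fun i => g (s (i + j))) :=
  rfl

def simplexPiece (n : ℕ) (a b : ℝ) (m : ℕ) : Set (Fin n → ℝ) :=
  {s | StrictMono s ∧ ∀ i : Fin n, s i ∈ if (i : ℕ) < m then Ioo 0 a else Ioo a b}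

theorem measurableSet_setOf_strictMono {ι : Type*} [Countable ι] [Preorder ι] :
    MeasurableSet {s : ι → ℝ | StrictMono s} := by
  have : {s : ι → ℝ | StrictMono s} = ⋂ (i : ι) (j : ι) (_ : i < j), {s | s i < s j} := by
    ext s; simp [StrictMono]
  rw [this]
  exact .iInter fun i => .iInter fun j => .iInter fun _ =>
    measurableSet_lt (measurable_pi_apply i) (measurable_pi_apply j)

theorem measurableSet_simplexPiece (a b : ℝ) (m : ℕ) : MeasurableSet (simplexPiece n a b m) := by
  have : simplexPiece n a b m = {s | StrictMono s} ∩
      ⋂ i : Fin n, (fun s => s i) ⁻¹' (if (i : ℕ) < m then Ioo 0 a else Ioo a b) := by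
    ext s; simp [simplexPiece]
  rw [this]
  exact measurableSet_setOf_strictMono.inter <| .iInter fun i =>
    measurable_pi_apply i (by split_ifs <;> exact measurableSet_Ioo)

theorem simplexPiece_subset_orderedSimplex {a b : ℝ} (ha : 0 < a) (hab : a < b) (m : ℕ) :
    simplexPiece n a b m ⊆ orderedSimplex n b := by
  rintro s ⟨hs, hmem⟩
  refine ⟨fun i => ?_, hs⟩
  have := hmem i
  split_ifs at this
  · exact ⟨this.1, this.2.trans hab⟩
  · exact ⟨ha.trans this.1, this.2⟩

theorem disjoint_simplexPiece {a b : ℝ} {m m' : ℕ} (hmm' : m < m') (hm' : m' ≤ n) :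
    Disjoint (simplexPiece n a b m) (simplexPiece n a b m') := by
  refine Set.disjoint_left.2 fun s ⟨_, h⟩ ⟨_, h'⟩ => ?_
  have hlow := h' ⟨m, hmm'.trans_le hm'⟩
  have hhigh := h ⟨m, hmm'.trans_le hm'⟩
  rw [if_pos hmm'] at hlow
  rw [if_neg (lt_irrefl m)] at hhigh
  exact (hlow.2.trans hhigh.1).false

theorem mem_simplexPiece_card_filter_lt {a b : ℝ} {s : Fin n → ℝ} (hs : s ∈ orderedSimplex n b)
    (hsa : ∀ i, s i ≠ a) : s ∈ simplexPiece n a b #{i | s i < a} := by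
  refine ⟨hs.2, fun i => ?_⟩
  have hcard := Fin.lt_card_filter_iff_of_antitone (P := fun i => s i < a)
    (fun i j hij hj => (hs.2.monotone hij).trans_lt hj) i
  split_ifs with hi
  · exact ⟨(hs.1 i).1, hcard.1 hi⟩
  · exact ⟨lt_of_le_of_ne (not_lt.1 (hcard.not.1 hi)) (hsa i).symm, (hs.1 i).2⟩

theorem volume_setOf_exists_eq (a : ℝ) : volume {s : Fin n → ℝ | ∃ i, s i = a} = 0 := by
  rw [ofPred_exists, volume_pi]
  exact measure_iUnion_null fun i =>
    Measure.pi_hyperplane (fun _ : Fin n => (volume : Measure ℝ)) i a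

theorem orderedSimplex_ae_eq_biUnion_simplexPiece {a b : ℝ} (ha : 0 < a) (hab : a < b) :
    orderedSimplex n b =ᵐ[volume] ⋃ m ∈ range (n + 1), simplexPiece n a b m := by
  refine (ae_eq_set).2 ⟨measure_mono_null (fun s ⟨hs, hs'⟩ => ?_) (volume_setOf_exists_eq a), ?_⟩
  · by_contra hsa
    refine hs' (mem_iUnion₂.2
      ⟨_, mem_range.2 ?_, mem_simplexPiece_card_filter_lt hs (not_exists.1 hsa)⟩)
    exact Nat.lt_succ_of_le ((card_filter_le _ _).trans (card_fin n).le)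
  · rw [sdiff_eq_empty.2 (iUnion₂_subset fun m _ => simplexPiece_subset_orderedSimplex ha hab m),
      measure_empty]

theorem volume_orderedSimplex_lt_top (t : ℝ) : volume (orderedSimplex n t) < ⊤ :=
  (measure_mono (t := univ.pi fun _ => Ioo 0 t) fun s hs i _ => hs.1 i).trans_lt <| by
    rw [volume_pi_pi]
    exact ENNReal.prod_lt_top fun _ _ => measure_Ioo_lt_top

theorem integrableOn_orderedSimplex_of_bounded {h : (Fin n → ℝ) → ℝ} (hm : Measurable h) {C : ℝ}
    (hC : ∀ x, |h x| ≤ C) (t : ℝ) : IntegrableOn h (orderedSimplex n t) :=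
  Measure.integrableOn_of_bounded (volume_orderedSimplex_lt_top t).ne hm.aestronglyMeasurable
    (ae_of_all _ hC)

theorem integral_orderedSimplex_eq_sum_simplexPiece {a b : ℝ} (ha : 0 < a) (hab : a < b)
    {h : (Fin n → ℝ) → ℝ} (hh : IntegrableOn h (orderedSimplex n b)) :
    ∫ s in orderedSimplex n b, h s = ∑ m ∈ range (n + 1), ∫ s in simplexPiece n a b m, h s := by
  rw [setIntegral_congr_set (orderedSimplex_ae_eq_biUnion_simplexPiece ha hab),
    integral_biUnion_finset _ (fun m _ => measurableSet_simplexPiece a b m)]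
  · intro m hm m' hm' hne
    simp only [coe_range, Set.mem_Iio] at hm hm'
    rcases hne.lt_or_gt with hlt | hlt
    · exact disjoint_simplexPiece hlt (by omega)
    · exact (disjoint_simplexPiece hlt (by omega)).symm
  · exact fun m _ => hh.mono_set (simplexPiece_subset_orderedSimplex ha hab m)

end Simplex

section WrapShift

variable {n : ℕ} [NeZero n]

/-- On `simplexPiece n a b m` this is "add `b - a` and reduce mod `b`", followed by the rotation
of indices that makes the result increasing again. -/
def wrapShift (a b : ℝ) (m : ℕ) (s : Fin n → ℝ) : Fin n → ℝ :=
  fun p => s (p + m) + if ((p + m : Fin n) : ℕ) < m then b - a else -a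

theorem wrapShift_apply_sub_natCast (a b : ℝ) (m : ℕ) (s : Fin n → ℝ) (q : Fin n) :
    wrapShift a b m s (q - m) = s q + if (q : ℕ) < m then b - a else -a := by
  simp only [wrapShift, sub_add_cancel]

theorem wrapShift_apply_of_lt {a b : ℝ} {m : ℕ} (hm : m ≤ n) (s : Fin n → ℝ) {p : Fin n}
    (hp : (p : ℕ) < n - m) : wrapShift a b m s p = s (p + m) - a := by
  rw [wrapShift, if_neg (by rw [Fin.val_add_natCast_lt_iff hm]; omega), sub_eq_add_neg]

theorem wrapShift_apply_of_le {a b : ℝ} {m : ℕ} (hm : m ≤ n) (s : Fin n → ℝ) {p : Fin n}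
    (hp : n - m ≤ p) : wrapShift a b m s p = s (p + m) + (b - a) := by
  rw [wrapShift, if_pos ((Fin.val_add_natCast_lt_iff hm p).2 hp)]

theorem wrapShift_wrapShift {m : ℕ} (hm : m ≤ n) (a b : ℝ) (s : Fin n → ℝ) :
    wrapShift (b - a) b (n - m) (wrapShift a b m s) = s := by
  funext p
  have hp : p + ((n - m : ℕ) : Fin n) + (m : Fin n) = p := by
    rw [add_assoc, Fin.natCast_sub_add_natCast hm, add_zero]
  have hlt := Fin.val_add_natCast_lt_iff (Nat.sub_le n m) p
  rw [Nat.sub_sub_self hm] at hlt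
  simp only [wrapShift, hp, hlt]
  split_ifs <;> first | omega | ring

theorem wrapShift_mapsTo {a b : ℝ} {m : ℕ} (hm : m ≤ n) :
    MapsTo (wrapShift a b m) (simplexPiece n a b m) (simplexPiece n (b - a) b (n - m)) := by
  rintro s ⟨hs, hmem⟩
  have hval := Fin.val_add_natCast_of_le hm
  have hblock : ∀ p : Fin n, wrapShift a b m s p ∈
      if (p : ℕ) < n - m then Ioo 0 (b - a) else Ioo (b - a) b := by
    intro p
    have := hmem (p + m)
    rw [hval] at this
    by_cases hp : (p : ℕ) < n - m
    · rw [if_pos hp, if_neg (by omega)] at this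
      rw [if_pos hp, wrapShift_apply_of_lt hm s hp]
      exact ⟨by linarith [this.1], by linarith [this.2]⟩
    · rw [if_neg hp, if_pos (by omega)] at this
      rw [if_neg hp, wrapShift_apply_of_le hm s (not_lt.1 hp)]
      exact ⟨by linarith [this.1], by linarith [this.2]⟩
  refine ⟨fun p q hpq => ?_, hblock⟩
  have hpq' : (p : ℕ) < q := hpq
  have hp := hblock p
  have hq := hblock q
  have hshift : p + (m : Fin n) < q + m ↔ ((p : ℕ) < n - m ↔ (q : ℕ) < n - m) := by
    rw [Fin.lt_def, hval, hval]
    split_ifs <;> omega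
  split_ifs at hp hq with hpl hql hql
  · rw [wrapShift_apply_of_lt hm s hpl, wrapShift_apply_of_lt hm s hql]
    linarith [hs (hshift.2 (iff_of_true hpl hql))]
  · linarith [hp.2, hq.1]
  · omega
  · rw [wrapShift_apply_of_le hm s (not_lt.1 hpl), wrapShift_apply_of_le hm s (not_lt.1 hql)]
    linarith [hs (hshift.2 (iff_of_false hpl hql))]

theorem wrapShift_image {a b : ℝ} {m : ℕ} (hm : m ≤ n) :
    wrapShift a b m '' simplexPiece n a b m = simplexPiece n (b - a) b (n - m) := by
  refine (wrapShift_mapsTo hm).image_subset.antisymm fun w hw =>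
    ⟨wrapShift (b - a) b (n - m) w, ?_, ?_⟩
  · simpa only [sub_sub_cancel, Nat.sub_sub_self hm] using
      wrapShift_mapsTo (a := b - a) (b := b) (Nat.sub_le n m) hw
  · simpa only [sub_sub_cancel, Nat.sub_sub_self hm] using
      wrapShift_wrapShift (Nat.sub_le n m) (b - a) b w

def wrapShiftEquiv (a b : ℝ) {m : ℕ} (hm : m ≤ n) : (Fin n → ℝ) ≃ᵐ (Fin n → ℝ) where
  toFun := wrapShift a b m
  invFun := wrapShift (b - a) b (n - m)
  left_inv := wrapShift_wrapShift hm a b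
  right_inv w := by
    simpa only [sub_sub_cancel, Nat.sub_sub_self hm] using
      wrapShift_wrapShift (Nat.sub_le n m) (b - a) b w
  measurable_toFun := measurable_pi_lambda _ fun _ => (measurable_pi_apply _).add_const _
  measurable_invFun := measurable_pi_lambda _ fun _ => (measurable_pi_apply _).add_const _

theorem measurePreserving_wrapShift (a b : ℝ) (m : ℕ) :
    MeasurePreserving (wrapShift (n := n) a b m) := by
  set c : Fin n → ℝ := fun q => if (q : ℕ) < m then b - a else -a
  have hrot :=
    volume_measurePreserving_piCongrLeft (fun _ : Fin n => ℝ) (Equiv.subRight (m : Fin n))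
  have : wrapShift a b m = _ ∘ (· + c) := funext fun s => funext fun p => by
    simpa [wrapShift, c] using (MeasurableEquiv.piCongrLeft_apply_apply (Equiv.subRight (m : Fin n))
      (β := fun _ : Fin n => ℝ) (s + c) (p + m)).symm
  exact this ▸ hrot.comp (measurePreserving_add_right volume c)

theorem setIntegral_simplexPiece_comp_wrapShift {a b : ℝ} {m : ℕ} (hm : m ≤ n)
    (φ : (Fin n → ℝ) → ℝ) :
    ∫ s in simplexPiece n a b m, φ (wrapShift a b m s)
      = ∫ w in simplexPiece n (b - a) b (n - m), φ w := by
  rw [← wrapShift_image hm]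
  exact ((measurePreserving_wrapShift a b m).setIntegral_image_emb
    (wrapShiftEquiv a b hm).measurableEmbedding φ _).symm

end WrapShift

section Invariance

variable {n : ℕ}

theorem setIntegral_simplexPiece_comp_add [NeZero n] {X : Type*} {g : ℝ → X} {t : ℝ}
    (hg : Periodic g t) (r : ℝ) {m : ℕ} (hm : m ≤ n) (F : (Fin n → X) → ℝ) (j : Fin n) :
    ∫ s in simplexPiece n (t - r) t m, F (fun i => g (s (i + j) + r))
      = ∫ w in simplexPiece n r t (n - m), F (fun i => g (w (i + (j - m)))) := by
  have hwrap : ∀ s : Fin n → ℝ,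
      (fun i => g (s (i + j) + r)) = fun i => g (wrapShift (t - r) t m s (i + (j - m))) := by
    refine fun s => funext fun i => ?_
    rw [← add_sub_assoc, wrapShift_apply_sub_natCast, sub_sub_cancel]
    split_ifs
    · rfl
    · rw [show s (i + j) + -(t - r) = s (i + j) + r - t by ring, hg.sub_eq]
  simp_rw [hwrap]
  rw [setIntegral_simplexPiece_comp_wrapShift hm (fun w => F fun i => g (w (i + (j - m)))),
    sub_sub_cancel]

variable {X : Type*} [MeasurableSpace X] {g : ℝ → X} {t : ℝ} {F : (Fin n → X) → ℝ} {C : ℝ}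

theorem occField_comp_add_of_mem_Ioo [NeZero n] (hg : Periodic g t) (hgm : Measurable g)
    (hF : Measurable F) (hC : ∀ z, |F z| ≤ C) {r : ℝ} (hr : r ∈ Ioo 0 t) :
    occField n (fun u => g (u + r)) t F = occField n g t F := by
  obtain ⟨hr0, hrt⟩ := hr
  have hint : ∀ (j : Fin n) (c : ℝ),
      IntegrableOn (fun s : Fin n → ℝ => F fun i => g (s (i + j) + c)) (orderedSimplex n t) :=
    fun j c => integrableOn_orderedSimplex_of_bounded (by fun_prop) (fun _ => hC _) t
  simp only [occField_eq_sum_integral_orderedSimplex]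
  calc ∑ j : Fin n, ∫ s in orderedSimplex n t, F (fun i => g (s (i + j) + r))
      = ∑ j : Fin n, ∑ m ∈ range (n + 1),
          ∫ s in simplexPiece n (t - r) t m, F (fun i => g (s (i + j) + r)) :=
        sum_congr rfl fun j _ =>
          integral_orderedSimplex_eq_sum_simplexPiece (by linarith) (by linarith) (hint j r)
    _ = ∑ j : Fin n, ∑ m ∈ range (n + 1),
          ∫ w in simplexPiece n r t (n - m), F (fun i => g (w (i + (j - m)))) :=
        sum_congr rfl fun j _ => sum_congr rfl fun m hm =>
          setIntegral_simplexPiece_comp_add hg r (Nat.lt_succ_iff.1 (mem_range.1 hm)) F j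
    _ = ∑ m ∈ range (n + 1), ∑ j : Fin n,
          ∫ w in simplexPiece n r t (n - m), F (fun i => g (w (i + j))) := by
        rw [sum_comm]
        exact sum_congr rfl fun m _ =>
          Fintype.sum_equiv (Equiv.subRight (m : Fin n)) _ _ fun _ => rfl
    _ = ∑ j : Fin n, ∑ m ∈ range (n + 1),
          ∫ w in simplexPiece n r t m, F (fun i => g (w (i + j))) := by
        rw [sum_comm]
        exact sum_congr rfl fun j _ => sum_range_reflect
          (fun m => ∫ w in simplexPiece n r t m, F (fun i => g (w (i + j)))) (n + 1)
    _ = ∑ j : Fin n, ∫ s in orderedSimplex n t, F (fun i => g (s (i + j))) :=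
        sum_congr rfl fun j _ => (integral_orderedSimplex_eq_sum_simplexPiece hr0 hrt
          (by simpa using hint j 0)).symm

theorem occField_comp_add (hg : Periodic g t) (ht : 0 < t) (hgm : Measurable g)
    (hF : Measurable F) (hC : ∀ z, |F z| ≤ C) (r : ℝ) :
    occField n (fun u => g (u + r)) t F = occField n g t F := by
  rcases n.eq_zero_or_pos with rfl | hn
  · simp [occField]
  have : NeZero n := ⟨hn.ne'⟩
  have hmod : (fun u => g (u + r)) = fun u => g (u + toIcoMod ht 0 r) := funext fun u => by
    conv_lhs => rw [← toIcoMod_add_toIcoDiv_zsmul ht 0 r, ← add_assoc]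
    exact hg.zsmul _ _
  obtain ⟨hr0, hrt⟩ := toIcoMod_mem_Ico ht 0 r
  rcases hr0.eq_or_lt with hr0 | hr0
  · simp [hmod, ← hr0]
  · rw [hmod]
    exact occField_comp_add_of_mem_Ioo hg hgm hF hC ⟨hr0, by simpa using hrt⟩

end Invariance

theorem occField_shift_invariant_general [MeasurableSpace S] [BorelSpace S]
    (l : BasedLoop S) (r : ℝ)
    (n : ℕ) (f : (Fin n → S) → ℝ) (hf : Measurable f) (C : ℝ) (hC : ∀ z, |f z| ≤ C) :
    occField n (l.shift r).f (l.shift r).len f = occField n l.f l.len f :=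
  occField_comp_add l.periodic l.len_pos (measurable_of_continuousWithinAt_Ioi l.rightCont) hf hC r

/-- The multi-occupation field is invariant under circular translation of based loops:
`⟨Θ_r l, f⟩ = ⟨l, f⟩` for every bounded measurable `f : Sⁿ → ℝ`. -/
theorem occField_shift_invariant [MeasurableSpace S] [BorelSpace S]
    (l : BasedLoop S) (r : ℝ) (hr : r ∈ Ico 0 l.len)
    (n : ℕ) (f : (Fin n → S) → ℝ) (hf : Measurable f) (C : ℝ) (hC : ∀ z, |f z| ≤ C) :
    occField n (l.shift r).f (l.shift r).len f = occField n l.f l.len f :=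
  occField_shift_invariant_general l r n f hf C hC
end

section
/- Let (E, ℬ(E)) be a Polish space with its Borel σ-field, and let {f_i : i ∈ ℕ} be a countable family of Borel measurable real-valued functions, with F = σ(f_i : i ∈ ℕ). Then F = ℬ(E) if and only if the family separates points: for all x ≠ y in E there exists i with f_i(x) ≠ f_i(y). -/
open MeasureTheory

/-- Blackwell-type criterion: on a Polish space `E` with its Borel σ-field, the σ-field
generated by a countable family of Borel measurable real functions equals the Borel σ-field
iff the family separates points. -/
theorem sigma_generated_iff_separating
    {E : Type*} [MetricSpace E] [CompleteSpace E] [TopologicalSpace.SeparableSpace E]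
    [mE : MeasurableSpace E] [BorelSpace E]
    (f : ℕ → E → ℝ) (hf : ∀ i, Measurable (f i)) :
    (⨆ i : ℕ, MeasurableSpace.comap (f i) (inferInstance : MeasurableSpace ℝ)) = mE ↔
      ∀ x y : E, x ≠ y → ∃ i, f i x ≠ f i y := by
  set g : E → (ℕ → ℝ) := fun x i => f i x with hg
  have hkey : (⨆ i : ℕ, MeasurableSpace.comap (f i) (inferInstance : MeasurableSpace ℝ))
      = MeasurableSpace.comap g (inferInstance : MeasurableSpace (ℕ → ℝ)) := by
    show _ = MeasurableSpace.comap g MeasurableSpace.pi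
    rw [MeasurableSpace.pi, MeasurableSpace.comap_iSup]
    congr 1
    ext i
    rw [MeasurableSpace.comap_comp]
  have hgmeas : Measurable g := measurable_pi_lambda _ hf
  constructor
  · intro h x y hxy
    by_contra hc
    push_neg at hc
    have hxs : MeasurableSet {x} := measurableSet_singleton x
    rw [← h, hkey] at hxs
    obtain ⟨s, -, hs⟩ := hxs
    have hgxy : g x = g y := funext hc
    have : y ∈ ({x} : Set E) := by
      have hx : x ∈ g ⁻¹' s := by rw [hs]; exact rfl
      have hy : y ∈ g ⁻¹' s := by simpa [Set.mem_preimage, ← hgxy] using hx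
      rw [hs] at hy; exact hy
    exact hxy (this.symm)
  · intro hsep
    have hginj : Function.Injective g := by
      intro x y hxy
      by_contra hne
      obtain ⟨i, hi⟩ := hsep x y hne
      exact hi (congrFun hxy i)
    have hemb : MeasurableEmbedding g := hgmeas.measurableEmbedding hginj
    rw [hkey]
    apply le_antisymm
    · exact hgmeas.comap_le
    · intro s hs
      refine ⟨g '' s, hemb.measurableSet_image.2 hs, ?_⟩
      rw [Set.preimage_image_eq _ hginj]
end

section
/- Let l_1, l_2 be càdlàg functions ℝ_+ → S, both periodic of period t, and T ∈ [0,t] such that for every s ≥ 0 either l_2(s+T) = l_1(s) or l_2((s+T)−) = l_1(s) (left limit). Then l_2(s+T) = l_1(s) for all s ≥ 0. -/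
open Filter Topology Set

/-- If `l₁, l₂` are càdlàg `t`-periodic paths and `T ∈ [0,t]` is such that for every
`s ≥ 0` either `l₂(s+T) = l₁(s)` or `l₂((s+T)⁻) = l₁(s)`, then `l₂(s+T) = l₁(s)` for
all `s ≥ 0`. -/
theorem cadlag_eq_of_eq_or_leftLim
    {S : Type*} [MetricSpace S]
    (l1 l2 : ℝ → S) (t : ℝ) (ht : 0 < t)
    (hper1 : ∀ s, l1 (s + t) = l1 s) (hper2 : ∀ s, l2 (s + t) = l2 s)
    (hrc1 : ∀ u, Tendsto l1 (𝓝[>] u) (𝓝 (l1 u)))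
    (hrc2 : ∀ u, Tendsto l2 (𝓝[>] u) (𝓝 (l2 u)))
    (hll1 : ∀ u, ∃ y, Tendsto l1 (𝓝[<] u) (𝓝 y))
    (hll2 : ∀ u, ∃ y, Tendsto l2 (𝓝[<] u) (𝓝 y))
    (T : ℝ) (hT : T ∈ Icc 0 t)
    (h : ∀ s ≥ (0:ℝ), l2 (s + T) = l1 s ∨
        ∃ y, Tendsto l2 (𝓝[<] (s + T)) (𝓝 y) ∧ y = l1 s) :
    ∀ s ≥ (0:ℝ), l2 (s + T) = l1 s := by
  intro s hs
  by_contra hne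
  set ε : ℝ := dist (l2 (s + T)) (l1 s) / 3 with hε_def
  have hε : 0 < ε := by
    have := dist_pos.mpr hne
    positivity
  obtain ⟨δ₂, hδ₂pos, hδ₂⟩ :=
    (Metric.tendsto_nhdsWithin_nhds.mp (hrc2 (s + T))) ε hε
  obtain ⟨δ₁, hδ₁pos, hδ₁⟩ :=
    (Metric.tendsto_nhdsWithin_nhds.mp (hrc1 s)) ε hε
  set η : ℝ := min δ₁ δ₂ / 2 with hη_def
  have hηpos : 0 < η := by positivity
  have hη₁ : η < δ₁ := by
    have : min δ₁ δ₂ ≤ δ₁ := min_le_left _ _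
    simp only [hη_def]; linarith
  have hη₂ : η < δ₂ := by
    have : min δ₁ δ₂ ≤ δ₂ := min_le_right _ _
    simp only [hη_def]; linarith
  set s' : ℝ := s + η with hs'_def
  have hs's : s < s' := by simp [hs'_def]; linarith
  have hs'0 : s' ≥ (0 : ℝ) := by linarith
  -- l1 s' is close to l1 s
  have h1 : dist (l1 s') (l1 s) < ε := by
    apply hδ₁ (by exact hs's)
    rw [Real.dist_eq, hs'_def]
    rw [abs_of_pos (by linarith)]
    linarith
  -- l2 (s' + T) is close to l2 (s + T)
  have h2 : dist (l2 (s' + T)) (l2 (s + T)) < ε := by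
    apply hδ₂ (show s' + T ∈ Ioi (s + T) by simp [mem_Ioi]; linarith)
    rw [Real.dist_eq, abs_of_pos (by linarith)]
    linarith
  rcases h s' hs'0 with heq | ⟨y, hy, hyeq⟩
  · -- then l2 (s+T) is 2ε-close to l1 s, contradiction with dist = 3ε
    rw [heq] at h2
    have := dist_triangle (l2 (s + T)) (l1 s') (l1 s)
    rw [dist_comm (l2 (s + T)) (l1 s')] at this
    have h3ε : dist (l2 (s + T)) (l1 s) = 3 * ε := by
      simp only [hε_def]; ring
    linarith
  · -- the left limit y at s'+T is within ε of l2 (s+T)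
    have hmem : Ioo (s + T) (s' + T) ∈ 𝓝[<] (s' + T) :=
      Ioo_mem_nhdsLT_of_mem ⟨by linarith, le_refl _⟩
    have hev : ∀ᶠ x in 𝓝[<] (s' + T), dist (l2 x) (l2 (s + T)) ≤ ε := by
      filter_upwards [hmem] with x hx
      apply le_of_lt
      apply hδ₂ (mem_Ioi.mpr hx.1)
      rw [Real.dist_eq, abs_of_pos (by linarith [hx.1])]
      have := hx.2
      linarith
    have htend : Tendsto (fun x => dist (l2 x) (l2 (s + T))) (𝓝[<] (s' + T))
        (𝓝 (dist y (l2 (s + T)))) := hy.dist tendsto_const_nhds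
    have hle : dist y (l2 (s + T)) ≤ ε := le_of_tendsto htend hev
    rw [hyeq] at hle
    have := dist_triangle (l2 (s + T)) (l1 s') (l1 s)
    rw [dist_comm (l2 (s + T)) (l1 s')] at this
    have h3ε : dist (l2 (s + T)) (l1 s) = 3 * ε := by
      simp only [hε_def]; ring
    linarith
end
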